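/- arXiv:2604.17348 — 3 statements merged into one kernel-verified Lean document; each statement's English description precedes it below -/
import Mathlib

section
/- Let a, b, u, φ' be positive real constants with b > 0, φ' ≠ 0, and 0 < (a·φ' − b·u)/(b·φ') < 1/3. Define θ₀ = artanh(√(3(aφ' − bu)/(bφ'))) and f(θ) = 2√(φ'/(aφ' − bu))·θ + √(3/b)·ln(cosh(θ − θ₀)/cosh(θ + θ₀)). Then f : ℝ → ℝ is strictly increasing and bijective. -/
/-! The derivative of `f` is `K + L (tanh (θ - θ₀) - tanh (θ + θ₀))` with `K = 2√(c / (ac - bu))`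
and `L = √(3 / b)`. Since `tanh` takes values in `(-1, 1)` it is bounded below by `K - 2L`, which is
positive exactly because `(ac - bu) / (bc) < 1/3`. A function whose derivative is bounded below by a
positive constant is strictly increasing and tends to `±∞` at `±∞`, hence bijective. -/

open Real Filter

noncomputable def artanh (x : ℝ) : ℝ := (1/2) * Real.log ((1 + x) / (1 - x))

theorem strictMono_bijective_of_hasDerivAt_ge {f f' : ℝ → ℝ} {C : ℝ}
    (hf : ∀ x, HasDerivAt f (f' x) x) (hC : 0 < C) (hf' : ∀ x, C ≤ f' x) :
    StrictMono f ∧ Function.Bijective f := by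
  have hdiff : Differentiable ℝ f := fun x => (hf x).differentiableAt
  have hderiv : deriv f = f' := funext fun x => (hf x).deriv
  have hmono : StrictMono f := strictMono_of_deriv_pos fun x => hderiv ▸ hC.trans_le (hf' x)
  have hgrow : ∀ ⦃x y⦄, x ≤ y → C * (y - x) ≤ f y - f x :=
    mul_sub_le_image_sub_of_le_deriv hdiff (hderiv ▸ hf')
  have htop : Tendsto f atTop atTop := by
    refine tendsto_atTop_mono' _ (eventually_atTop.mpr ⟨0, fun x hx => ?_⟩)
      (tendsto_atTop_add_const_left _ (f 0) (tendsto_id.const_mul_atTop hC))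
    show f 0 + C * x ≤ f x
    linarith [hgrow hx]
  have hbot : Tendsto f atBot atBot := by
    refine tendsto_atBot_mono' _ (eventually_atBot.mpr ⟨0, fun x hx => ?_⟩)
      (tendsto_atBot_add_const_left _ (f 0) (tendsto_id.const_mul_atBot hC))
    show f x ≤ f 0 + C * x
    linarith [hgrow hx]
  exact ⟨hmono, hmono.injective, hdiff.continuous.surjective htop hbot⟩

theorem hasDerivAt_log_cosh_sub_div_cosh_add (s θ : ℝ) :
    HasDerivAt (fun x => log (cosh (x - s) / cosh (x + s))) (tanh (θ - s) - tanh (θ + s)) θ := by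
  have hlogcosh (t : ℝ) : HasDerivAt (fun x => log (cosh (x + t))) (tanh (θ + t)) θ := by
    have := ((hasDerivAt_cosh _).comp θ ((hasDerivAt_id θ).add_const t)).log (cosh_pos _).ne'
    simpa [tanh_eq_sinh_div_cosh] using this
  have hfun : (fun x => log (cosh (x - s) / cosh (x + s))) =
      fun x => log (cosh (x + -s)) - log (cosh (x + s)) := by
    funext x
    rw [log_div (cosh_pos _).ne' (cosh_pos _).ne', sub_eq_add_neg x]
  rw [hfun, sub_eq_add_neg θ]
  exact (hlogcosh (-s)).sub (hlogcosh s)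

theorem sqrt_three_div_lt_sqrt_div {b c d : ℝ} (hb : 0 < b) (h1 : 0 < d / (b * c))
    (h2 : d / (b * c) < 1 / 3) : √(3 / b) < √(c / d) := by
  obtain ⟨hd, hbc⟩ := div_ne_zero_iff.mp h1.ne'
  have hc : c ≠ 0 := right_ne_zero_of_mul hbc
  have hcd : c / d = (b * (d / (b * c)))⁻¹ := by field_simp
  refine sqrt_lt_sqrt (by positivity) ?_
  rw [hcd, ← inv_div b 3, inv_lt_inv₀ (by positivity) (by positivity)]
  linarith [mul_lt_mul_of_pos_left h2 hb]

theorem stmt_0_general (a b u c : ℝ) (hb : 0 < b)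
    (h1 : 0 < (a * c - b * u) / (b * c)) (h2 : (a * c - b * u) / (b * c) < 1/3) :
    let θ₀ := _root_.artanh (Real.sqrt (3 * (a * c - b * u) / (b * c)))
    let f : ℝ → ℝ := fun θ =>
      2 * Real.sqrt (c / (a * c - b * u)) * θ +
        Real.sqrt (3 / b) * Real.log (Real.cosh (θ - θ₀) / Real.cosh (θ + θ₀))
    StrictMono f ∧ Function.Bijective f := by
  intro θ₀ f
  set K := 2 * √(c / (a * c - b * u))
  set L := √(3 / b)
  have hKL : 2 * L < K := by linarith [sqrt_three_div_lt_sqrt_div hb h1 h2]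
  refine strictMono_bijective_of_hasDerivAt_ge (C := K - 2 * L)
    (fun θ => ((hasDerivAt_id θ).const_mul K).add
      ((hasDerivAt_log_cosh_sub_div_cosh_add θ₀ θ).const_mul L)) (by linarith) fun θ => ?_
  have hL : 0 ≤ L := sqrt_nonneg _
  nlinarith [tanh_lt_one (θ + θ₀), neg_one_lt_tanh (θ - θ₀)]

theorem stmt_0 (a b u c : ℝ) (ha : 0 < a) (hb : 0 < b) (hu : 0 < u) (hc : 0 < c)
    (h1 : 0 < (a * c - b * u) / (b * c)) (h2 : (a * c - b * u) / (b * c) < 1/3) :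
    let θ₀ := _root_.artanh (Real.sqrt (3 * (a * c - b * u) / (b * c)))
    let f : ℝ → ℝ := fun θ =>
      2 * Real.sqrt (c / (a * c - b * u)) * θ +
        Real.sqrt (3 / b) * Real.log (Real.cosh (θ - θ₀) / Real.cosh (θ + θ₀))
    StrictMono f ∧ Function.Bijective f :=
  stmt_0_general a b u c hb h1 h2
end

section
/- Fix constants c₁ = φ', A = aφ' − bu, B = b with B > 0 and 0 < A/(Bc₁) < 1/3, c₁ > 0. Define H(v, y) = B·v³ − 3(v − c₁)·y² − 3A·v². Then H is a first integral of the planar system v' = y, y' = (y² − B v² + 2A v)/(2(c₁ − v)): along any solution (v(τ), y(τ)) with v(τ) ≠ c₁, the derivative d/dτ H(v(τ), y(τ)) = 0. -/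
/-! By the chain rule, `d/dτ H = 3 v' (B v² - y² - 2 A v) - 6 (v - c₁) y y'`. With `v' = y` and
`2 (c₁ - v) y' = y² - B v² + 2 A v`, the second term is `3 y (y² - B v² + 2 A v)`, which cancels
the first. -/

def cubicFirstIntegral (c₁ A B v y : ℝ) : ℝ :=
  B * v ^ 3 - 3 * (v - c₁) * y ^ 2 - 3 * A * v ^ 2

theorem HasDerivAt.cubicFirstIntegral {c₁ A B v' y' τ : ℝ} {v y : ℝ → ℝ}
    (hv : HasDerivAt v v' τ) (hy : HasDerivAt y y' τ) :
    HasDerivAt (fun s => cubicFirstIntegral c₁ A B (v s) (y s))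
      (3 * v' * (B * v τ ^ 2 - y τ ^ 2 - 2 * A * v τ) - 6 * (v τ - c₁) * y τ * y') τ := by
  have hcube := (hv.fun_pow 3).const_mul B
  have hmixed := ((hv.sub_const c₁).const_mul 3).fun_mul (hy.fun_pow 2)
  have hsq := (hv.fun_pow 2).const_mul (3 * A)
  refine ((hcube.sub hmixed).sub hsq).congr_deriv ?_
  push_cast
  ring

theorem cubicFirstIntegral_derivative_along_field_eq_zero {c₁ A B v y : ℝ} (hv : v ≠ c₁) :
    3 * y * (B * v ^ 2 - y ^ 2 - 2 * A * v)
      - 6 * (v - c₁) * y * ((y ^ 2 - B * v ^ 2 + 2 * A * v) / (2 * (c₁ - v))) = 0 := by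
  have hden : c₁ - v ≠ 0 := sub_ne_zero.2 hv.symm
  field_simp
  ring

theorem stmt_3_general (c₁ A B : ℝ)
    (H : ℝ → ℝ → ℝ) (hH : ∀ v y, H v y = B * v ^ 3 - 3 * (v - c₁) * y ^ 2 - 3 * A * v ^ 2)
    (v y : ℝ → ℝ)
    (hv : ∀ τ, HasDerivAt v (y τ) τ)
    (hy : ∀ τ, HasDerivAt y ((y τ ^ 2 - B * v τ ^ 2 + 2 * A * v τ) / (2 * (c₁ - v τ))) τ)
    (hne : ∀ τ, v τ ≠ c₁) :
    ∀ τ, HasDerivAt (fun s => H (v s) (y s)) 0 τ := by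
  intro τ
  have hderiv := (hv τ).cubicFirstIntegral (c₁ := c₁) (A := A) (B := B) (hy τ)
  rw [cubicFirstIntegral_derivative_along_field_eq_zero (hne τ)] at hderiv
  simpa only [hH, cubicFirstIntegral] using hderiv

theorem stmt_3 (c₁ A B : ℝ) (hB : 0 < B) (hc₁ : 0 < c₁)
    (h1 : 0 < A / (B * c₁)) (h2 : A / (B * c₁) < 1/3)
    (H : ℝ → ℝ → ℝ) (hH : ∀ v y, H v y = B * v ^ 3 - 3 * (v - c₁) * y ^ 2 - 3 * A * v ^ 2)
    (v y : ℝ → ℝ)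
    (hv : ∀ τ, HasDerivAt v (y τ) τ)
    (hy : ∀ τ, HasDerivAt y ((y τ ^ 2 - B * v τ ^ 2 + 2 * A * v τ) / (2 * (c₁ - v τ))) τ)
    (hne : ∀ τ, v τ ≠ c₁) :
    ∀ τ, HasDerivAt (fun s => H (v s) (y s)) 0 τ :=
  stmt_3_general c₁ A B H hH v y hv hy hne
end

section
/- Let a, b, u, c be positive constants with b > 0, 0 < (a·c − b·u)/(b·c) < 1/3. Define κ = 3(ac − bu)/b and m = 3(ac − bu)/(bc) ∈ (0, 1/3), and set w(θ) = κ / (cosh²θ − m·sinh²θ). Then w satisfies, with τ and θ related by dτ/dθ = 2√(c/(ac − bu)) + √(3/b) · (tanh(θ − θ₀) − tanh(θ + θ₀)) where θ₀ = artanh(√m), the equation (dw/dτ)² = (b w³ − 3(ac − bu) w²)/(3(w − c)), i.e. the pair (w(θ), τ(θ)) gives a parametric solution of the soliton ODE. -/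
open Real Filter

/-!
Write `Q θ = cosh²θ - m sinh²θ = 1 + (1 - m) sinh²θ`, so that `w = κ / Q` with `κ = m c`.
Since `tanh θ₀ = √m`, the addition formulas give `tanh (θ - θ₀) - tanh (θ + θ₀) = -2√m / Q`, and
as `√(3/b) √m = m √(c/(ac - bu))` this turns `dτ/dθ` into `2 √(c/(ac - bu)) (1 - m) cosh²θ / Q`.
Because `Q - 1 = (1 - m) sinh²θ` and `Q - m = (1 - m) cosh²θ`, both sides of the equation then
reduce to `m³ b c² sinh²θ / (3 Q² cosh²θ)`.
-/

theorem artanh_eq_real_artanh {x : ℝ} (hx : x ∈ Set.Icc (-1) 1) :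
    _root_.artanh x = Real.artanh x :=
  (Real.artanh_eq_half_log hx).symm

theorem tanh_sub_sub_tanh_add (x y : ℝ) :
    tanh (x - y) - tanh (x + y) = -2 * tanh y / (cosh x ^ 2 - tanh y ^ 2 * sinh x ^ 2) := by
  have hsub := cosh_pos (x - y)
  have hadd := cosh_pos (x + y)
  have hy := (cosh_pos y).ne'
  have hprod : cosh (x - y) * cosh (x + y) =
      cosh y ^ 2 * (cosh x ^ 2 - tanh y ^ 2 * sinh x ^ 2) := by
    rw [cosh_sub, cosh_add, tanh_eq_sinh_div_cosh]
    field_simp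
    ring
  have hQ : 0 < cosh x ^ 2 - tanh y ^ 2 * sinh x ^ 2 :=
    pos_of_mul_pos_right (hprod ▸ mul_pos hsub hadd) (sq_nonneg _)
  rw [tanh_eq_sinh_div_cosh, tanh_eq_sinh_div_cosh, div_sub_div _ _ hsub.ne' hadd.ne', ← sinh_sub,
    hprod, show x - y - (x + y) = -(2 * y) by ring, sinh_neg, sinh_two_mul, tanh_eq_sinh_div_cosh]
  field_simp

theorem cosh_sq_sub_mul_sinh_sq_pos {m : ℝ} (hm : m ≤ 1) (x : ℝ) :
    0 < cosh x ^ 2 - m * sinh x ^ 2 := by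
  have : 0 ≤ (1 - m) * sinh x ^ 2 := mul_nonneg (by linarith) (sq_nonneg _)
  linarith [cosh_sq' x]

theorem hasDerivAt_div_cosh_sq_sub_mul_sinh_sq {m : ℝ} (hm : m ≤ 1) (κ x : ℝ) :
    HasDerivAt (fun x => κ / (cosh x ^ 2 - m * sinh x ^ 2))
      (-(2 * κ * (1 - m) * sinh x * cosh x) / (cosh x ^ 2 - m * sinh x ^ 2) ^ 2) x := by
  have hQ : HasDerivAt (fun x => cosh x ^ 2 - m * sinh x ^ 2)
      (2 * (1 - m) * sinh x * cosh x) x :=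
    (((hasDerivAt_cosh x).fun_pow 2).fun_sub
      (((hasDerivAt_sinh x).fun_pow 2).const_mul m)).congr_deriv (by push_cast; ring)
  exact ((hasDerivAt_const x κ).div hQ (cosh_sq_sub_mul_sinh_sq_pos hm x).ne').congr_deriv
    (by ring)

theorem sqrt_three_div_mul_sqrt {b c D : ℝ} (hb : 0 < b) (hc : 0 < c) (hD : 0 < D) :
    √(3 / b) * √(3 * D / (b * c)) = 3 * D / (b * c) * √(c / D) := by
  rw [← sqrt_mul (by positivity),
    show 3 / b * (3 * D / (b * c)) = (3 * D / (b * c)) ^ 2 * (c / D) by field_simp,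
    sqrt_mul (by positivity), sqrt_sq (by positivity)]

/-- `s, t` stand for `sinh θ, cosh θ`, `p` for `√(c / (ac - bu))`, and the equation is written
with `3 (ac - bu) = m b c`. -/
theorem parametric_soliton_identity {b c m p s t Q : ℝ} (hc : 0 < c) (hm : m < 1)
    (hp : m * b * p ^ 2 = 3) (ht : t ^ 2 = 1 + s ^ 2) (hQ : Q = t ^ 2 - m * s ^ 2) :
    (-(2 * (m * c) * (1 - m) * s * t) / Q ^ 2 / (2 * p - 2 * (m * p) / Q)) ^ 2 =
      (b * (m * c / Q) ^ 3 - m * b * c * (m * c / Q) ^ 2) / (3 * (m * c / Q - c)) := by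
  have h1m : 0 < 1 - m := by linarith
  have ht2 : 0 < t ^ 2 := by rw [ht]; positivity
  have ht0 : t ≠ 0 := by rintro rfl; simp at ht2
  have hp0 : p ≠ 0 := by rintro rfl; simp at hp
  have hQpos : 0 < Q := by rw [hQ, ht]; nlinarith [mul_nonneg h1m.le (sq_nonneg s)]
  have hQm : Q - m = (1 - m) * t ^ 2 := by rw [hQ, ht]; ring
  have hT : 2 * p - 2 * (m * p) / Q = 2 * p * ((1 - m) * t ^ 2) / Q := by
    rw [← hQm]; field_simp
  have hW : m * c / Q - c = -(c * ((1 - m) * t ^ 2)) / Q := by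
    rw [← hQm]; field_simp; ring
  rw [hT, hW]
  field_simp
  rw [hQ]
  linear_combination (-(m ^ 2 * s ^ 2 * (1 - m))) * hp - m ^ 3 * p ^ 2 * b * ht

theorem stmt_5_general (a b u c : ℝ) (hb : 0 < b) (hc : 0 < c)
    (h1 : 0 < (a * c - b * u) / (b * c)) (h2 : (a * c - b * u) / (b * c) < 1/3) :
    let κ := 3 * (a * c - b * u) / b
    let m := 3 * (a * c - b * u) / (b * c)
    let θ₀ := _root_.artanh (Real.sqrt m)
    let w : ℝ → ℝ := fun θ => κ / (Real.cosh θ ^ 2 - m * Real.sinh θ ^ 2)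
    -- dτ/dθ
    let T : ℝ → ℝ := fun θ =>
      2 * Real.sqrt (c / (a * c - b * u)) +
        Real.sqrt (3 / b) * (Real.tanh (θ - θ₀) - Real.tanh (θ + θ₀))
    ∀ θ : ℝ, (deriv w θ / T θ) ^ 2 =
      (b * w θ ^ 3 - 3 * (a * c - b * u) * w θ ^ 2) / (3 * (w θ - c)) := by
  intro κ m θ₀ w T θ
  have hD : 0 < a * c - b * u := (div_pos_iff_of_pos_right (mul_pos hb hc)).mp h1
  have hm0 : 0 < m := by positivity
  have hm1 : m < 1 := by
    have : m = 3 * ((a * c - b * u) / (b * c)) := by ring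
    linarith
  have hκ : κ = m * c := by simp only [κ, m]; field_simp
  have h3D : 3 * (a * c - b * u) = m * b * c := by simp only [m]; field_simp
  have hp : m * b * √(c / (a * c - b * u)) ^ 2 = 3 := by
    rw [sq_sqrt (by positivity)]; simp only [m]; field_simp
  have hθ₀ : tanh θ₀ = √m := by
    have hsqrt : √m ∈ Set.Ioo (-1) 1 :=
      ⟨by linarith [sqrt_nonneg m], (sqrt_lt' one_pos).mpr (by linarith)⟩
    simp only [θ₀]
    rw [artanh_eq_real_artanh (Set.Ioo_subset_Icc_self hsqrt), Real.tanh_artanh hsqrt]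
  have hT : T θ = 2 * √(c / (a * c - b * u)) -
      2 * (m * √(c / (a * c - b * u))) / (cosh θ ^ 2 - m * sinh θ ^ 2) := by
    simp only [T]
    rw [tanh_sub_sub_tanh_add, hθ₀, sq_sqrt hm0.le, ← sqrt_three_div_mul_sqrt hb hc hD]
    ring
  simp only [w]
  rw [(hasDerivAt_div_cosh_sq_sub_mul_sinh_sq hm1.le κ θ).deriv, hT, h3D, hκ]
  exact parametric_soliton_identity hc hm1 hp (cosh_sq' θ) rfl

theorem stmt_5 (a b u c : ℝ) (ha : 0 < a) (hb : 0 < b) (hu : 0 < u) (hc : 0 < c)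
    (h1 : 0 < (a * c - b * u) / (b * c)) (h2 : (a * c - b * u) / (b * c) < 1/3) :
    let κ := 3 * (a * c - b * u) / b
    let m := 3 * (a * c - b * u) / (b * c)
    let θ₀ := _root_.artanh (Real.sqrt m)
    let w : ℝ → ℝ := fun θ => κ / (Real.cosh θ ^ 2 - m * Real.sinh θ ^ 2)
    -- dτ/dθ
    let T : ℝ → ℝ := fun θ =>
      2 * Real.sqrt (c / (a * c - b * u)) +
        Real.sqrt (3 / b) * (Real.tanh (θ - θ₀) - Real.tanh (θ + θ₀))
    ∀ θ : ℝ, (deriv w θ / T θ) ^ 2 =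
      (b * w θ ^ 3 - 3 * (a * c - b * u) * w θ ^ 2) / (3 * (w θ - c)) :=
  stmt_5_general a b u c hb hc h1 h2
end
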